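/- Let K be a quadratic field and let E be the elliptic curve y² = x³ + 1 over K. Then the torsion subgroup E(K)_tors is not isomorphic to ℤ/12ℤ. -/

import Mathlib

/-!
A point `(x, y)` of order `4` on `y² = x³ + 1` doubles to a point with `Y = 0`, which forces
`x⁶ + 20x³ - 8 = 0`, i.e. `(x³ + 10)² = 108`. Thus `s = (x³ + 10) / 6` is a square root of `3`
and `y² = 6s - 9`. In the quadratic field `K = ℚ(s)`, writing `y = a + bs` gives
`a² + 3b² = -9`, which is impossible. So `E(K)` has no point of order `4`, while `ℤ/12ℤ` does.
-/

/-- The Weierstrass curve `y² = x³ + 1` over `K`, i.e. with coefficients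
`a₁ = a₂ = a₃ = a₄ = 0`, `a₆ = 1`. -/
def curveE (K : Type*) [Field K] : WeierstrassCurve K :=
  ⟨0, 0, 0, 0, 1⟩

open Module WeierstrassCurve.Affine

section QuadraticExtension

variable {F K : Type*} [Field F] [Field K] [Algebra F K] {s : K}

lemma linearIndependent_one_of_notMem_range (hs : s ∉ Set.range (algebraMap F K)) :
    LinearIndependent F ![1, s] := by
  rw [LinearIndependent.pair_iff' one_ne_zero]
  exact fun a ha => hs ⟨a, by rw [Algebra.algebraMap_eq_smul_one, ha]⟩

lemma eq_zero_of_algebraMap_add_algebraMap_mul_eq_zero (hs : s ∉ Set.range (algebraMap F K))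
    {a b : F} (h : algebraMap F K a + algebraMap F K b * s = 0) : a = 0 ∧ b = 0 := by
  have hli := linearIndependent_one_of_notMem_range hs
  rw [LinearIndependent.pair_iff] at hli
  exact hli a b (by rwa [Algebra.smul_def, Algebra.smul_def, mul_one])

lemma exists_algebraMap_add_algebraMap_mul_eq (hK : finrank F K = 2)
    (hs : s ∉ Set.range (algebraMap F K)) (y : K) :
    ∃ a b : F, algebraMap F K a + algebraMap F K b * s = y := by
  have hspan := (linearIndependent_one_of_notMem_range hs).span_eq_top_of_card_eq_finrank
    (by rw [hK, Fintype.card_fin])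
  obtain ⟨c, hc⟩ :=
    (Submodule.mem_span_range_iff_exists_fun F).mp (hspan ▸ Submodule.mem_top (x := y))
  refine ⟨c 0, c 1, ?_⟩
  rw [← hc, Fin.sum_univ_two]
  simp [Algebra.smul_def]

end QuadraticExtension

lemma not_isSquare_six_mul_sub_nine {K : Type*} [Field K] [CharZero K] (hK : finrank ℚ K = 2)
    {s : K} (hs : s ^ 2 = 3) : ¬IsSquare (6 * s - 9) := by
  have hs_irrat : s ∉ Set.range (algebraMap ℚ K) := by
    rintro ⟨q, rfl⟩
    have : IsSquare (3 : ℚ) :=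
      ⟨q, (algebraMap ℚ K).injective (by rw [map_mul, ← sq, hs, map_ofNat])⟩
    norm_num at this
  rintro ⟨y, hy⟩
  obtain ⟨a, b, rfl⟩ := exists_algebraMap_add_algebraMap_mul_eq hK hs_irrat y
  obtain ⟨h, -⟩ := eq_zero_of_algebraMap_add_algebraMap_mul_eq_zero hs_irrat
    (a := a ^ 2 + 3 * b ^ 2 + 9) (b := 2 * a * b - 6) <| by
      simp only [map_add, map_sub, map_mul, map_pow, map_ofNat]
      linear_combination -hy - (algebraMap ℚ K b) ^ 2 * hs
  nlinarith [sq_nonneg a, sq_nonneg b]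

namespace WeierstrassCurve.Affine.Point

variable {F : Type*} [Field F] [DecidableEq F] {W : WeierstrassCurve.Affine F} {x y : F}

lemma two_nsmul_some_eq_zero_iff {h : W.Nonsingular x y} :
    2 • some _ _ h = 0 ↔ y = W.negY x y := by
  rw [two_nsmul, add_eq_zero_iff_eq_neg, neg_some, some.injEq]
  exact and_iff_right rfl

lemma addY_self_eq_negY_of_addOrderOf_eq_four {h : W.Nonsingular x y}
    (hP : addOrderOf (some _ _ h) = 4) :
    y ≠ W.negY x y ∧ W.addY x x y (W.slope x x y y) =
      W.negY (W.addX x x (W.slope x x y y)) (W.addY x x y (W.slope x x y y)) := by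
  have hy : y ≠ W.negY x y := by
    rw [Ne, ← two_nsmul_some_eq_zero_iff (h := h), ← addOrderOf_dvd_iff_nsmul_eq_zero, hP]
    norm_num
  have h4 : 2 • 2 • some _ _ h = 0 := by
    rw [smul_smul, show 2 * 2 = addOrderOf (some _ _ h) from hP.symm]
    exact addOrderOf_nsmul_eq_zero _
  rw [two_nsmul (some _ _ h), add_self_of_Y_ne hy, two_nsmul_some_eq_zero_iff] at h4
  exact ⟨hy, h4⟩

end WeierstrassCurve.Affine.Point

section CurveE

variable {K : Type*} [Field K] {x y : K}

@[simp]
lemma curveE_negY : (curveE K).toAffine.negY x y = -y := by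
  simp [negY, curveE]

lemma curveE_equation_iff : (curveE K).toAffine.Equation x y ↔ y ^ 2 = x ^ 3 + 1 := by
  simp [equation_iff, curveE]

lemma curveE_slope_self [DecidableEq K] (hy : y ≠ -y) :
    (curveE K).toAffine.slope x x y y = 3 * x ^ 2 / (2 * y) := by
  rw [slope_of_Y_ne rfl (by rwa [curveE_negY])]
  simp only [curveE, negY]
  ring

lemma curveE_addY_self (ℓ : K) :
    (curveE K).toAffine.addY x x y ℓ = -(ℓ * (ℓ ^ 2 - 3 * x) + y) := by
  simp only [addY, negAddY, addX, negY, curveE]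
  ring

lemma curveE_sextic_of_addOrderOf_eq_four [DecidableEq K] {h : (curveE K).toAffine.Nonsingular x y}
    (hP : addOrderOf (Point.some _ _ h) = 4) : x ^ 6 + 20 * x ^ 3 - 8 = 0 := by
  obtain ⟨hy, hY⟩ := Point.addY_self_eq_negY_of_addOrderOf_eq_four hP
  rw [curveE_negY] at hy hY
  have h2y : 2 * y ≠ 0 := by contrapose! hy; linear_combination hy
  have h2 : (2 : K) ≠ 0 := left_ne_zero_of_mul h2y
  have hy0 : y ≠ 0 := right_ne_zero_of_mul h2y
  have hE := curveE_equation_iff.mp h.1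
  rw [eq_neg_iff_add_eq_zero, ← two_mul, mul_eq_zero, curveE_slope_self hy,
    curveE_addY_self] at hY
  have hY' := hY.resolve_left h2
  field_simp at hY'
  linear_combination hY' + (8 * y ^ 2 - 28 * x ^ 3 + 8) * hE

lemma curveE_addOrderOf_ne_four [CharZero K] [DecidableEq K] (hK : finrank ℚ K = 2)
    (P : (curveE K).toAffine.Point) : addOrderOf P ≠ 4 := by
  intro hP
  cases P with
  | zero => rw [← Point.zero_def, addOrderOf_zero] at hP; norm_num at hP
  | @some x y h =>
    have hx := curveE_sextic_of_addOrderOf_eq_four hP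
    have hy := curveE_equation_iff.mp h.1
    refine not_isSquare_six_mul_sub_nine hK (s := (x ^ 3 + 10) / 6) ?_ ⟨y, ?_⟩
    · field_simp
      linear_combination hx
    · field_simp
      linear_combination -hy

end CurveE

open Classical in
/-- Let `K` be a quadratic field and let `E` be the elliptic curve `y² = x³ + 1` over
`K`.  Then `E(K)_tors` is not isomorphic to `ℤ/12ℤ`. -/
theorem torsion_x_cubed_plus_one_not_twelve (K : Type*) [Field K] [NumberField K]
    (hK : Module.finrank ℚ K = 2) :
    ¬Nonempty (AddCommGroup.torsion (curveE K).toAffine.Point ≃+ ZMod 12) := by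
  rintro ⟨e⟩
  have h3 : addOrderOf (3 : ZMod 12) = 4 := by
    simpa using ZMod.addOrderOf_coe 3 (n := 12) (by norm_num)
  refine curveE_addOrderOf_ne_four hK (e.symm 3) ?_
  rw [AddSubgroup.addOrderOf_coe, AddEquiv.addOrderOf_eq, h3]
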